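/- Let Π be a partition of ℕ. Then Comm_{𝔖_ℕ}(𝔖_Π) = 𝔖_Π if and only if Π has at most one finite block. -/

import Mathlib

/-!
If `Π` has two finite blocks `A ∋ a` and `B ∋ b`, the transposition `(a b)` centralizes the
subgroup of `𝔖_Π` fixing `a` and `b`, which has finite index because `𝔖_Π` moves `a` and `b`
only inside the finite sets `A` and `B`; so `(a b)` commensurates `𝔖_Π` without lying in it.

Conversely, let `g` commensurate `𝔖_Π` and suppose it moves a point `x` of an infinite block `A`
out of `A`. Conjugating the transpositions `(x z) ∈ 𝔖_Π`, for the infinitely many `z ∈ A` fixed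
by `g`, gives elements `(gx z)` of `g 𝔖_Π g⁻¹` in pairwise distinct cosets of `𝔖_Π`, because
`(gx z)(gx w)` sends `gx` to `w ∈ A`. Hence `g` preserves the infinite blocks, and applying this
to `g⁻¹`, it maps no finite block into an infinite one; with at most one finite block, `g`
preserves every block.
-/

/-- The finitary symmetric group `𝔖_A` of a set (type) `A`: the subgroup of `Equiv.Perm A`
consisting of bijections moving only finitely many points. -/
def finitaryPerms (α : Type*) : Subgroup (Equiv.Perm α) where
  carrier := {σ | {x | σ x ≠ x}.Finite}
  one_mem' := by simp
  mul_mem' := by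
    intro a b ha hb
    refine Set.Finite.subset (ha.union hb) ?_
    intro x hx
    by_contra hmem
    simp only [Set.mem_union, Set.mem_setOf_eq, not_or, not_not] at hmem
    exact hx (by simp [Equiv.Perm.mul_apply, hmem.2, hmem.1])
  inv_mem' := by
    intro a ha
    refine Set.Finite.subset (ha.image a) ?_
    intro x hx
    refine ⟨a⁻¹ x, ?_, Equiv.apply_symm_apply a x⟩
    simp only [Set.mem_setOf_eq, Equiv.Perm.inv_def, Equiv.apply_symm_apply]
    exact fun h => hx h.symm


/-- The Young subgroup `𝔖_Π` associated to a partition `Π` of `ℕ`, as a subgroup of the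
infinite symmetric group `𝔖_ℕ` of finitary permutations: all finitary permutations mapping
every block of `Π` onto itself. -/
def youngSubgroup (P : Set (Set ℕ)) : Subgroup (finitaryPerms ℕ) where
  carrier := {σ | ∀ A ∈ P, (σ : Equiv.Perm ℕ) '' A = A}
  one_mem' := by intro A _; simp
  mul_mem' := by
    intro a b ha hb A hA
    have hcomp : ⇑((a : Equiv.Perm ℕ) * (b : Equiv.Perm ℕ)) =
        ⇑(a : Equiv.Perm ℕ) ∘ ⇑(b : Equiv.Perm ℕ) := rfl
    show ⇑(((a * b : finitaryPerms ℕ)) : Equiv.Perm ℕ) '' A = A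
    rw [Subgroup.coe_mul, hcomp, Set.image_comp, hb A hA, ha A hA]
  inv_mem' := by
    intro a ha A hA
    show ⇑((a⁻¹ : finitaryPerms ℕ) : Equiv.Perm ℕ) '' A = A
    rw [Subgroup.coe_inv]
    have := congrArg (Set.image ⇑(a : Equiv.Perm ℕ)⁻¹) (ha A hA)
    rw [← Set.image_comp,
      (by funext x; simp : ⇑(a : Equiv.Perm ℕ)⁻¹ ∘ ⇑(a : Equiv.Perm ℕ) = id), Set.image_id] at this
    exact this.symm

open Pointwise Subgroup MulAction

theorem Subgroup.mem_commensurator_of_mem_normalizer {G : Type*} [Group G] {H K : Subgroup G}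
    (hKH : K ≤ H) (hK : K.relIndex H ≠ 0) {g : G} (hg : g ∈ normalizer (K : Set G)) :
    g ∈ Commensurable.commensurator H := by
  have hcomm : Commensurable K H := ⟨hK, by simp [relIndex_eq_one.mpr hKH]⟩
  have hconj := hcomm.conj (ConjAct.toConjAct g)
  rw [conjAct_pointwise_smul_eq_self hg] at hconj
  exact hconj.symm.trans hcomm

theorem Subgroup.le_commensurator {G : Type*} [Group G] (H : Subgroup G) :
    H ≤ Commensurable.commensurator H := fun _ hh =>
  mem_commensurator_of_mem_normalizer le_rfl (by simp) (le_normalizer hh)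

theorem Subgroup.relIndex_eq_zero_of_injective {G ι : Type*} [Group G] [Infinite ι]
    {H K : Subgroup G} (f : ι → G) (hfK : ∀ i, f i ∈ K) (hf : ∀ i j, (f i)⁻¹ * f j ∈ H → i = j) :
    H.relIndex K = 0 := by
  rw [relIndex, index, Nat.card_eq_zero]
  refine Or.inr (Infinite.of_injective (fun i => (QuotientGroup.mk ⟨f i, hfK i⟩ : K ⧸ _))
    fun i j hij => hf i j ?_)
  rwa [QuotientGroup.eq, mem_subgroupOf] at hij

theorem MulAction.relIndex_stabilizer_ne_zero {G α : Type*} [Group G] [MulAction G α]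
    {H : Subgroup G} {a : α} (h : (orbit H a).Finite) : (stabilizer G a).relIndex H ≠ 0 := by
  have hsub : (stabilizer G a).subgroupOf H = stabilizer H a := rfl
  rw [relIndex, hsub, index_stabilizer]
  exact ((Set.ncard_pos h).mpr ⟨a, mem_orbit_self a⟩).ne'

namespace finitaryPerms

variable {α : Type*} [DecidableEq α]

theorem swap_mem (a b : α) : Equiv.swap a b ∈ finitaryPerms α :=
  (Set.toFinite {a, b}).subset fun x hx => by
    by_contra h
    simp only [Set.mem_insert_iff, Set.mem_singleton_iff, not_or] at h
    exact hx (Equiv.swap_apply_of_ne_of_ne h.1 h.2)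

def swap (a b : α) : finitaryPerms α := ⟨Equiv.swap a b, swap_mem a b⟩

@[simp]
theorem swap_smul (a b x : α) : swap a b • x = Equiv.swap a b x := rfl

end finitaryPerms

namespace youngSubgroup

variable {P : Set (Set ℕ)}

theorem smul_mem {σ : finitaryPerms ℕ} (hσ : σ ∈ youngSubgroup P) {A : Set ℕ} (hA : A ∈ P)
    {x : ℕ} (hx : x ∈ A) : σ • x ∈ A := by
  rw [← hσ A hA]
  exact Set.mem_image_of_mem _ hx

theorem orbit_subset {A : Set ℕ} (hA : A ∈ P) {x : ℕ} (hx : x ∈ A) :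
    orbit (youngSubgroup P) x ⊆ A := by
  rintro _ ⟨σ, rfl⟩
  exact smul_mem σ.2 hA hx

theorem mem_of_forall_smul_mem (hP : Setoid.IsPartition P) {σ : finitaryPerms ℕ}
    (h : ∀ A ∈ P, ∀ x ∈ A, σ • x ∈ A) : σ ∈ youngSubgroup P := by
  refine fun A hA => (Set.image_subset_iff.mpr fun x hx => h A hA x hx).antisymm fun y hy => ?_
  obtain ⟨C, ⟨hC, hyC⟩, -⟩ := hP.2 (σ⁻¹ • y)
  have hAC : A = C := Setoid.eq_of_mem_eqv_class hP.2 hA hy hC (by simpa using h C hC _ hyC)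
  exact ⟨σ⁻¹ • y, hAC ▸ hyC, smul_inv_smul σ y⟩

theorem swap_mem (hP : Setoid.IsPartition P) {A : Set ℕ} (hA : A ∈ P) {a b : ℕ} (ha : a ∈ A)
    (hb : b ∈ A) : finitaryPerms.swap a b ∈ youngSubgroup P := by
  refine mem_of_forall_smul_mem hP fun C hC x hx => ?_
  have hCA : x ∈ A → C = A := Setoid.eq_of_mem_eqv_class hP.2 hC hx hA
  rw [finitaryPerms.swap_smul]
  rcases eq_or_ne x a with rfl | hxa
  · simpa [hCA ha] using hb
  rcases eq_or_ne x b with rfl | hxb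
  · simpa [hCA hb] using ha
  · rwa [Equiv.swap_apply_of_ne_of_ne hxa hxb]

theorem swap_mem_commensurator {A B : Set ℕ} (hA : A ∈ P) (hAfin : A.Finite) (hB : B ∈ P)
    (hBfin : B.Finite) {a b : ℕ} (ha : a ∈ A) (hb : b ∈ B) :
    finitaryPerms.swap a b ∈ Commensurable.commensurator (youngSubgroup P) := by
  refine mem_commensurator_of_mem_normalizer
    (K := youngSubgroup P ⊓ (stabilizer _ a ⊓ stabilizer _ b)) inf_le_left ?_ ?_
  · rw [inf_relIndex_left]
    exact relIndex_inf_ne_zero (relIndex_stabilizer_ne_zero (hAfin.subset (orbit_subset hA ha)))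
      (relIndex_stabilizer_ne_zero (hBfin.subset (orbit_subset hB hb)))
  · refine centralizer_le_normalizer _ (mem_centralizer_iff.mpr fun σ hσ => ?_)
    obtain ⟨-, hσa, hσb⟩ := hσ
    have h := Equiv.mul_swap_eq_swap_mul (σ : Equiv.Perm ℕ) a b
    rw [show (σ : Equiv.Perm ℕ) a = a from hσa, show (σ : Equiv.Perm ℕ) b = b from hσb] at h
    exact Subtype.ext h

theorem smul_mem_of_mem_commensurator (hP : Setoid.IsPartition P) {g : finitaryPerms ℕ}
    (hg : g ∈ Commensurable.commensurator (youngSubgroup P)) {A : Set ℕ} (hA : A ∈ P)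
    (hAinf : A.Infinite) {x : ℕ} (hx : x ∈ A) : g • x ∈ A := by
  by_contra hgx
  obtain ⟨B, ⟨hB, hgxB⟩, -⟩ := hP.2 (g • x)
  set Z := A \ insert x {y | g • y ≠ y}
  have hZ : Z.Infinite := hAinf.sdiff (Set.Finite.insert x g.2)
  have := hZ.to_subtype
  refine ((Commensurable.commensurator_mem_iff _ _).mp hg).2 (relIndex_eq_zero_of_injective (ι := Z)
    (fun z => finitaryPerms.swap (g • x) z) (fun z => ?_) fun z w hzw => ?_)
  · have hgz : g • (z : ℕ) = z := by
      by_contra h; exact z.2.2 (Or.inr h)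
    have hconj : finitaryPerms.swap (g • x) (z : ℕ) = g * finitaryPerms.swap x z * g⁻¹ :=
      Subtype.ext (by
        have h := Equiv.swap_apply_apply (g : Equiv.Perm ℕ) x z
        rwa [show (g : Equiv.Perm ℕ) z = z from hgz] at h)
    rw [mem_pointwise_smul_iff_inv_smul_mem, ← ConjAct.toConjAct_inv, ConjAct.toConjAct_smul,
      hconj, inv_inv]
    simpa [mul_assoc] using swap_mem hP hA hx z.2.1
  · by_contra hne
    have hwy : (w : ℕ) ≠ g • x := fun h => hgx (h ▸ w.2.1)
    have hwz : (w : ℕ) ≠ z := fun h => hne (Subtype.ext h.symm)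
    have hmaps : ((finitaryPerms.swap (g • x) z)⁻¹ * finitaryPerms.swap (g • x) w) • (g • x)
        = w := by
      rw [mul_smul, inv_smul_eq_iff, finitaryPerms.swap_smul, finitaryPerms.swap_smul,
        Equiv.swap_apply_left, Equiv.swap_apply_of_ne_of_ne hwy hwz]
    have hAB : A = B :=
      Setoid.eq_of_mem_eqv_class hP.2 hA w.2.1 hB (hmaps ▸ smul_mem hzw hB hgxB)
    exact hgx (hAB ▸ hgxB)

theorem commensurator_le (hP : Setoid.IsPartition P) (hfin : {A ∈ P | A.Finite}.Subsingleton) :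
    Commensurable.commensurator (youngSubgroup P) ≤ youngSubgroup P := by
  intro g hg
  refine mem_of_forall_smul_mem hP fun A hA x hx => ?_
  obtain hAfin | hAinf := A.finite_or_infinite
  · obtain ⟨C, ⟨hC, hgxC⟩, -⟩ := hP.2 (g • x)
    obtain hCfin | hCinf := C.finite_or_infinite
    · rwa [hfin ⟨hA, hAfin⟩ ⟨hC, hCfin⟩]
    · have hxC : x ∈ C := by
        simpa using smul_mem_of_mem_commensurator hP (inv_mem hg) hC hCinf hgxC
      exact absurd (Setoid.eq_of_mem_eqv_class hP.2 hA hx hC hxC ▸ hAfin) hCinf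
  · exact smul_mem_of_mem_commensurator hP hg hA hAinf hx

end youngSubgroup

/-- `Comm_{𝔖_ℕ}(𝔖_Π) = 𝔖_Π` if and only if the partition `Π` has at most one finite block. -/
theorem commensurator_eq_youngSubgroup_iff (P : Set (Set ℕ)) (hP : Setoid.IsPartition P) :
    Subgroup.Commensurable.commensurator (youngSubgroup P) = youngSubgroup P ↔
      {A ∈ P | A.Finite}.Subsingleton := by
  refine ⟨fun hcomm A ⟨hA, hAfin⟩ B ⟨hB, hBfin⟩ => ?_,
    fun hfin => (youngSubgroup.commensurator_le hP hfin).antisymm (le_commensurator _)⟩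
  obtain ⟨a, ha⟩ := Setoid.nonempty_of_mem_partition hP hA
  obtain ⟨b, hb⟩ := Setoid.nonempty_of_mem_partition hP hB
  have hswap := hcomm ▸ youngSubgroup.swap_mem_commensurator hA hAfin hB hBfin ha hb
  have hbA : b ∈ A := by simpa using youngSubgroup.smul_mem hswap hA ha
  exact Setoid.eq_of_mem_eqv_class hP.2 hA hbA hB hb
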